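/- arXiv:2508.07443 — 2 statements merged into one kernel-verified Lean document; each statement's English description precedes it below -/
import Mathlib

section
/- The subspace of power series inside Laurent series is its own annihilator under the residue pairing: for a formal Laurent series f over a field K, the coefficient of z^{-1} in f·g vanishes for every formal power series g (viewed as a Laurent series) if and only if f itself is a formal power series (has no negative-degree coefficients). -/
open PowerSeries

theorem HahnSeries.coeff_mul_eq_zero_of_neg {Γ R : Type*} [AddCommMonoid Γ] [LinearOrder Γ]
    [IsOrderedCancelAddMonoid Γ] [NonUnitalNonAssocSemiring R] {f g : HahnSeries Γ R}
    (hf : ∀ n < 0, f.coeff n = 0) (hg : ∀ n < 0, g.coeff n = 0) {n : Γ} (hn : n < 0) :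
    (f * g).coeff n = 0 := by
  by_contra hfg
  obtain ⟨i, hi, j, hj, rfl⟩ := HahnSeries.support_mul_subset hfg
  have hi₀ : 0 ≤ i := not_lt.mp fun h ↦ hi (hf i h)
  have hj₀ : 0 ≤ j := not_lt.mp fun h ↦ hj (hg j h)
  exact (add_nonneg hi₀ hj₀).not_gt hn

namespace LaurentSeries

variable {R : Type*} [Semiring R]

theorem coeff_coe_of_neg (g : R⟦X⟧) {n : ℤ} (hn : n < 0) : (g : R⸨X⸩).coeff n = 0 := by
  rw [coeff_coe, if_pos hn]

theorem coeff_mul_coe_X_pow_add (f : R⸨X⸩) (n : ℤ) (m : ℕ) :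
    (f * ((X ^ m : R⟦X⟧) : R⸨X⸩)).coeff (n + m) = f.coeff n := by
  rw [HahnSeries.ofPowerSeries_X_pow, HahnSeries.coeff_mul_single_add, mul_one]

end LaurentSeries

/-- The power series `K⟦z⟧ ⊆ K⸨z⸩` are their own annihilator under the residue pairing:
the coefficient of `z⁻¹` in `f · g` vanishes for every power series `g` if and only if
`f` has no negative-degree coefficients, i.e. `f` is itself a power series. -/
theorem powerSeries_self_annihilator_residue_pairing {K : Type*} [Field K]
    (f : LaurentSeries K) :
    (∀ g : PowerSeries K, (f * (g : LaurentSeries K)).coeff (-1) = 0) ↔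
      ∀ n : ℤ, n < 0 → f.coeff n = 0 := by
  refine ⟨fun h n hn ↦ ?_, fun h g ↦ ?_⟩
  · -- pair `f` with `z ^ (-1 - n)` to read off its coefficient of `z ^ n`
    obtain ⟨m, rfl⟩ : ∃ m : ℕ, n = -1 - m := ⟨(-1 - n).toNat, by omega⟩
    have := f.coeff_mul_coe_X_pow_add (-1 - m) m
    rw [sub_add_cancel, h] at this
    exact this.symm
  · exact HahnSeries.coeff_mul_eq_zero_of_neg h (fun n hn ↦ LaurentSeries.coeff_coe_of_neg g hn)
      neg_one_lt_zero
end

section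
/- Let g be a Lie algebra over a field K of characteristic zero and κ : g × g → K a symmetric bilinear form that is invariant, i.e., κ([x,y], w) = κ(x, [y,w]) for all x,y,w. Define c on pure tensors of the loop algebra g ⊗ K[z, z^{-1}] by c(x ⊗ f, y ⊗ g) = κ(x,y) · Res(f · g'). Then c satisfies the Lie 2-cocycle identity: c([x,y] ⊗ f·g, w ⊗ h) + c([y,w] ⊗ g·h, x ⊗ f) + c([w,x] ⊗ h·f, y ⊗ g) = 0 for all x,y,w ∈ g and all Laurent polynomials f, g, h. -/
/-- The residue of a Laurent polynomial: the coefficient of `z⁻¹`. -/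
noncomputable def lpRes {K : Type*} [Field K] (f : LaurentPolynomial K) : K :=
  (AddMonoidAlgebra.coeff f : ℤ →₀ K) (-1)

/-- The formal derivative of a Laurent polynomial: `∑ aₙ zⁿ ↦ ∑ n aₙ zⁿ⁻¹`. -/
noncomputable def lpDeriv {K : Type*} [Field K] (f : LaurentPolynomial K) :
    LaurentPolynomial K :=
  AddMonoidAlgebra.ofCoeff
    ((AddMonoidAlgebra.coeff f : ℤ →₀ K).sum fun n a => (Finsupp.single (n - 1) (n • a) : ℤ →₀ K))

/-! Invariance and symmetry make `κ(⁅x, y⁆, w)` invariant under cyclic permutations of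
`(x, y, w)`, so the three terms share the coefficient `κ(⁅x, y⁆, w)`.  The residues then add up
to `Res (f g h') + Res (g h f') + Res (h f g') = Res ((f g h)')`, and an exact form `F'` has no
`z⁻¹` term, because differentiating `z⁰` gives `0`. -/

section LaurentCalculus

variable {K : Type*} [Field K]

lemma lpRes_add (f g : LaurentPolynomial K) : lpRes (f + g) = lpRes f + lpRes g := by
  simp only [lpRes, AddMonoidAlgebra.coeff_add, Finsupp.add_apply]

lemma lpDeriv_single (n : ℤ) (a : K) :
    lpDeriv (AddMonoidAlgebra.single n a : LaurentPolynomial K) =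
      AddMonoidAlgebra.single (n - 1) (n • a) :=
  congrArg AddMonoidAlgebra.ofCoeff (Finsupp.sum_single_index (by simp))

lemma lpDeriv_zero : lpDeriv (0 : LaurentPolynomial K) = 0 := by
  simp [lpDeriv, Finsupp.sum]

lemma lpDeriv_add (f g : LaurentPolynomial K) :
    lpDeriv (f + g) = lpDeriv f + lpDeriv g := by
  unfold lpDeriv
  rw [AddMonoidAlgebra.coeff_add, ← AddMonoidAlgebra.ofCoeff_add]
  exact congrArg AddMonoidAlgebra.ofCoeff
    (Finsupp.sum_add_index (by simp) (fun _ _ _ _ => by rw [smul_add, Finsupp.single_add]))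

lemma lpDeriv_single_mul_single (n m : ℤ) (a b : K) :
    lpDeriv (AddMonoidAlgebra.single n a * AddMonoidAlgebra.single m b : LaurentPolynomial K) =
      lpDeriv (AddMonoidAlgebra.single n a) * AddMonoidAlgebra.single m b +
        AddMonoidAlgebra.single n a * lpDeriv (AddMonoidAlgebra.single m b) := by
  simp only [lpDeriv_single, AddMonoidAlgebra.single_mul_single]
  rw [show n - 1 + m = n + m - 1 by ring, show n + (m - 1) = n + m - 1 by ring,
    ← AddMonoidAlgebra.single_add]
  congr 1
  simp only [zsmul_eq_mul]
  push_cast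
  ring

lemma lpDeriv_mul (f g : LaurentPolynomial K) :
    lpDeriv (f * g) = lpDeriv f * g + f * lpDeriv g := by
  induction f using AddMonoidAlgebra.induction_linear with
  | zero => simp [lpDeriv_zero]
  | add p q hp hq => rw [add_mul, lpDeriv_add, hp, hq, lpDeriv_add]; ring
  | single n a =>
    induction g using AddMonoidAlgebra.induction_linear with
    | zero => simp [lpDeriv_zero]
    | add p q hp hq => rw [mul_add, lpDeriv_add, hp, hq, lpDeriv_add]; ring
    | single m b => exact lpDeriv_single_mul_single n m a b

lemma lpDeriv_mul_mul (f g h : LaurentPolynomial K) :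
    lpDeriv (f * g * h) = f * g * lpDeriv h + g * h * lpDeriv f + h * f * lpDeriv g := by
  rw [lpDeriv_mul, lpDeriv_mul]
  ring

lemma lpRes_lpDeriv (f : LaurentPolynomial K) : lpRes (lpDeriv f) = 0 := by
  rw [lpRes, lpDeriv, AddMonoidAlgebra.coeff_ofCoeff, Finsupp.sum_apply]
  refine Finset.sum_eq_zero fun n _ => ?_
  show Finsupp.single (n - 1) (n • AddMonoidAlgebra.coeff f n) (-1) = 0
  rw [Finsupp.single_apply]
  split_ifs with hn
  · obtain rfl : n = 0 := by omega
    rw [zero_smul]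
  · rfl

end LaurentCalculus

section InvariantForm

variable {L M : Type*} [LieRing L] (B : L → L → M)

lemma apply_lie_rotate (hsymm : ∀ x y, B x y = B y x) (hinv : ∀ x y w, B ⁅x, y⁆ w = B x ⁅y, w⁆)
    (x y w : L) : B ⁅y, w⁆ x = B ⁅x, y⁆ w := by
  rw [← hsymm, ← hinv]

end InvariantForm

theorem kacMoody_cocycle_identity_general {K : Type*} [Field K]
    {𝔤 : Type*} [LieRing 𝔤] [LieAlgebra K 𝔤]
    (κ : 𝔤 →ₗ[K] 𝔤 →ₗ[K] K)
    (hsymm : ∀ x y : 𝔤, κ x y = κ y x)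
    (hinv : ∀ x y w : 𝔤, κ ⁅x, y⁆ w = κ x ⁅y, w⁆)
    (x y w : 𝔤) (f g h : LaurentPolynomial K) :
    κ ⁅x, y⁆ w * lpRes (f * g * lpDeriv h)
      + κ ⁅y, w⁆ x * lpRes (g * h * lpDeriv f)
      + κ ⁅w, x⁆ y * lpRes (h * f * lpDeriv g) = 0 := by
  have hrot := apply_lie_rotate (fun a b => κ a b) hsymm hinv
  rw [hrot x y w, ← hrot w x y, ← mul_add, ← mul_add, ← lpRes_add, ← lpRes_add,
    ← lpDeriv_mul_mul, lpRes_lpDeriv, mul_zero]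

/-- The Kac–Moody 2-cocycle identity.  Let `𝔤` be a Lie algebra over a field `K` of
characteristic zero and `κ` a symmetric invariant bilinear form on `𝔤`.  The cocycle
`c(x ⊗ f, y ⊗ g) = κ(x,y) · Res(f · g')` on the loop algebra `𝔤 ⊗ K[z,z⁻¹]` satisfies
the Lie 2-cocycle identity
`c([x,y] ⊗ fg, w ⊗ h) + c([y,w] ⊗ gh, x ⊗ f) + c([w,x] ⊗ hf, y ⊗ g) = 0`. -/
theorem kacMoody_cocycle_identity {K : Type*} [Field K] [CharZero K]
    {𝔤 : Type*} [LieRing 𝔤] [LieAlgebra K 𝔤]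
    (κ : 𝔤 →ₗ[K] 𝔤 →ₗ[K] K)
    (hsymm : ∀ x y : 𝔤, κ x y = κ y x)
    (hinv : ∀ x y w : 𝔤, κ ⁅x, y⁆ w = κ x ⁅y, w⁆)
    (x y w : 𝔤) (f g h : LaurentPolynomial K) :
    κ ⁅x, y⁆ w * lpRes (f * g * lpDeriv h)
      + κ ⁅y, w⁆ x * lpRes (g * h * lpDeriv f)
      + κ ⁅w, x⁆ y * lpRes (h * f * lpDeriv g) = 0 :=
  kacMoody_cocycle_identity_general κ hsymm hinv x y w f g h
end
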